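/- Let 0 < s < t < 1 and f be real-valued measurable on a cube Q. Then M_t(f,Q) - M_s(f,Q) ≤ 2 M_{max(t,1-s)}(|f - c|, Q) for every c ∈ R; consequently M_t(f,Q) - M_s(f,Q) ≤ 2 ω_{a'}(f,Q) with a' = min(1-t, s). -/

import Mathlib

open MeasureTheory Set

noncomputable section

/-- The axis-parallel half-open cube with corner `a` and side length `h`. -/
def cube {n : ℕ} (a : Fin n → ℝ) (h : ℝ) : Set (Fin n → ℝ) :=
  Set.univ.pi fun i => Set.Ico (a i) (a i + h)

def IsCube {n : ℕ} (Q : Set (Fin n → ℝ)) : Prop :=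
  ∃ a h, 0 < h ∧ Q = cube a h

/-- The upper `s`-median of `f` on `Q`. -/
def med {n : ℕ} (s : ℝ) (f : (Fin n → ℝ) → ℝ) (Q : Set (Fin n → ℝ)) : ℝ :=
  sSup {l : ℝ | (volume {x ∈ Q | f x < l}).toReal ≤ s * (volume Q).toReal}
/-- The local mean oscillation `ω_a(f,Q) = inf_c M_{1-a}(|f-c|,Q)`. -/
def localOsc {n : ℕ} (a : ℝ) (f : (Fin n → ℝ) → ℝ) (Q : Set (Fin n → ℝ)) : ℝ :=
  ⨅ c : ℝ, med (1 - a) (fun x => |f x - c|) Q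

/-!
Put `m = M_r(|f - c|, Q)` with `r = max t (1 - s)`. For every `l > m` the set where `|f - c| < l`
fills more than an `r`-fraction of `Q`. Since `r ≥ t`, `f < c + l` on more than a `t`-fraction of
`Q`, so `M_t(f) ≤ c + m`; since `r ≥ 1 - s`, `f < c - l` on less than an `s`-fraction of `Q`, so
`M_s(f) ≥ c - m`. Subtracting gives the first bound, and the infimum over `c` the second.
-/

open Filter Topology

variable {n : ℕ} {Q : Set (Fin n → ℝ)}

theorem IsCube.measurableSet (hQ : IsCube Q) : MeasurableSet Q := by
  obtain ⟨a, h, -, rfl⟩ := hQ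
  exact MeasurableSet.univ_pi fun _ => measurableSet_Ico

theorem IsCube.volume_toReal_pos (hQ : IsCube Q) : 0 < (volume Q).toReal := by
  obtain ⟨a, h, hh, rfl⟩ := hQ
  simp only [cube, volume_pi_pi, Real.volume_Ico, add_sub_cancel_left, ENNReal.toReal_prod,
    ENNReal.toReal_ofReal hh.le]
  positivity

section Sublevel

variable {g : (Fin n → ℝ) → ℝ} {p : ℝ}

theorem volume_sep_ne_top (hQ : 0 < (volume Q).toReal) (P : (Fin n → ℝ) → Prop) :
    volume {x ∈ Q | P x} ≠ ⊤ :=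
  ne_top_of_le_ne_top (ENNReal.toReal_pos_iff.1 hQ).2.ne (measure_mono (sep_subset _ _))

theorem tendsto_volume_sublevel_atTop (Q : Set (Fin n → ℝ)) (g : (Fin n → ℝ) → ℝ) :
    Tendsto (fun l : ℝ => volume {x ∈ Q | g x < l}) atTop (𝓝 (volume Q)) := by
  have hmono : Monotone fun l : ℝ => {x ∈ Q | g x < l} :=
    fun l l' hll' x hx => ⟨hx.1, hx.2.trans_le hll'⟩
  have hunion : ⋃ l : ℝ, {x ∈ Q | g x < l} = Q := by
    ext x
    simpa using fun _ => exists_gt (g x)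
  simpa only [hunion, Function.comp_def] using tendsto_measure_iUnion_atTop (μ := volume) hmono

theorem tendsto_volume_sublevel_atBot (hQm : MeasurableSet Q) (hQ : 0 < (volume Q).toReal)
    (hg : Measurable g) :
    Tendsto (fun l : ℝ => volume {x ∈ Q | g x < l}) atBot (𝓝 0) := by
  have hmono : Monotone fun l : ℝ => {x ∈ Q | g x < l} :=
    fun l l' hll' x hx => ⟨hx.1, hx.2.trans_le hll'⟩
  have hinter : ⋂ l : ℝ, {x ∈ Q | g x < l} = ∅ := by
    ext x
    simpa using ⟨g x, fun _ => le_rfl⟩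
  simpa only [hinter, measure_empty, Function.comp_def] using tendsto_measure_iInter_atBot
    (μ := volume) (s := fun l : ℝ => {x ∈ Q | g x < l})
    (fun l => (hQm.inter (hg measurableSet_Iio)).nullMeasurableSet) hmono
    ⟨0, volume_sep_ne_top hQ _⟩

theorem bddAbove_med_set (hQ : 0 < (volume Q).toReal) (hp : p < 1) :
    BddAbove {l : ℝ | (volume {x ∈ Q | g x < l}).toReal ≤ p * (volume Q).toReal} := by
  have hlim := (ENNReal.tendsto_toReal (ENNReal.toReal_pos_iff.1 hQ).2.ne).comp
    (tendsto_volume_sublevel_atTop Q g)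
  obtain ⟨l₀, hl₀⟩ := eventually_atTop.1 (hlim.eventually (eventually_gt_nhds
    (by nlinarith : p * (volume Q).toReal < (volume Q).toReal)))
  exact ⟨l₀, fun l hl => (not_le.1 fun hl₀l => (hl₀ l hl₀l).not_ge hl).le⟩

theorem nonempty_med_set (hQm : MeasurableSet Q) (hQ : 0 < (volume Q).toReal)
    (hg : Measurable g) (hp : 0 < p) :
    {l : ℝ | (volume {x ∈ Q | g x < l}).toReal ≤ p * (volume Q).toReal}.Nonempty := by
  have hlim := (ENNReal.tendsto_toReal ENNReal.zero_ne_top).comp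
    (tendsto_volume_sublevel_atBot hQm hQ hg)
  exact (hlim.eventually (eventually_lt_nhds (by simpa using mul_pos hp hQ))).exists.imp
    fun _ => le_of_lt

theorem le_med (hQ : 0 < (volume Q).toReal) (hp : p < 1) {l : ℝ}
    (hl : (volume {x ∈ Q | g x < l}).toReal ≤ p * (volume Q).toReal) : l ≤ med p g Q :=
  le_csSup (bddAbove_med_set hQ hp) hl

theorem lt_volume_of_med_lt (hQ : 0 < (volume Q).toReal) (hp : p < 1) {l : ℝ}
    (hl : med p g Q < l) : p * (volume Q).toReal < (volume {x ∈ Q | g x < l}).toReal :=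
  not_le.1 fun h => (le_med hQ hp h).not_gt hl

theorem med_le (hQm : MeasurableSet Q) (hQ : 0 < (volume Q).toReal) (hg : Measurable g)
    (hp : 0 < p) {b : ℝ}
    (h : ∀ l, (volume {x ∈ Q | g x < l}).toReal ≤ p * (volume Q).toReal → l ≤ b) :
    med p g Q ≤ b :=
  csSup_le (nonempty_med_set hQm hQ hg hp) h

end Sublevel

section Oscillation

variable {f : (Fin n → ℝ) → ℝ} {r s t : ℝ}

theorem med_le_add_med_abs_sub (hQm : MeasurableSet Q) (hQ : 0 < (volume Q).toReal)
    (hf : Measurable f) (ht : 0 < t) (htr : t ≤ r) (hr : r < 1) (c : ℝ) :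
    med t f Q ≤ c + med r (fun x => |f x - c|) Q := by
  refine med_le hQm hQ hf ht fun l hl => ?_
  by_contra! hlt
  have hbig := lt_volume_of_med_lt hQ hr (l := l - c) (by linarith)
  have hsub : {x ∈ Q | |f x - c| < l - c} ⊆ {x ∈ Q | f x < l} :=
    fun x hx => ⟨hx.1, by linarith [(abs_lt.1 hx.2).2]⟩
  have hmono := ENNReal.toReal_mono (volume_sep_ne_top hQ _) (measure_mono hsub)
  have hrt := mul_le_mul_of_nonneg_right htr hQ.le
  linarith

theorem sub_med_abs_sub_le_med (hQm : MeasurableSet Q) (hQ : 0 < (volume Q).toReal)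
    (hf : Measurable f) (hs : s < 1) (hsr : 1 - s ≤ r) (hr : r < 1) (c : ℝ) :
    c - med r (fun x => |f x - c|) Q ≤ med s f Q := by
  refine sub_le_comm.1 (le_of_forall_gt_imp_ge_of_dense fun l hl => ?_)
  rw [sub_le_comm]
  refine le_med hQ hs ?_
  have hdisj : Disjoint {x ∈ Q | f x < c - l} {x ∈ Q | |f x - c| < l} :=
    disjoint_left.2 fun x hx₁ hx₂ => by linarith [hx₁.2, (abs_lt.1 hx₂.2).1]
  have hsum : (volume {x ∈ Q | f x < c - l}).toReal + (volume {x ∈ Q | |f x - c| < l}).toReal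
      ≤ (volume Q).toReal := by
    rw [← ENNReal.toReal_add (volume_sep_ne_top hQ _) (volume_sep_ne_top hQ _),
      ← measure_union hdisj (hQm.inter ((hf.sub_const c).abs measurableSet_Iio))]
    exact ENNReal.toReal_mono (ENNReal.toReal_pos_iff.1 hQ).2.ne
      (measure_mono (union_subset (sep_subset _ _) (sep_subset _ _)))
  have hbig := lt_volume_of_med_lt hQ hr hl
  have hsr' := mul_le_mul_of_nonneg_right hsr hQ.le
  linarith

end Oscillation

theorem median_diff_le_localOsc {n : ℕ} (f : (Fin n → ℝ) → ℝ) (hf : Measurable f)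
    (s t : ℝ) (hs : 0 < s) (hst : s < t) (ht : t < 1)
    (Q : Set (Fin n → ℝ)) (hQ : IsCube Q) :
    (∀ c : ℝ, med t f Q - med s f Q ≤
      2 * med (max t (1 - s)) (fun x => |f x - c|) Q) ∧
    med t f Q - med s f Q ≤ 2 * localOsc (min (1 - t) s) f Q := by
  have hr : max t (1 - s) < 1 := max_lt ht (by linarith)
  have hbound : ∀ c : ℝ, med t f Q - med s f Q ≤
      2 * med (max t (1 - s)) (fun x => |f x - c|) Q := fun c => by
    linarith [med_le_add_med_abs_sub hQ.measurableSet hQ.volume_toReal_pos hf (hs.trans hst)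
        (le_max_left _ _) hr c,
      sub_med_abs_sub_le_med hQ.measurableSet hQ.volume_toReal_pos hf (hst.trans ht)
        (le_max_right _ _) hr c]
  refine ⟨hbound, ?_⟩
  have hexp : 1 - min (1 - t) s = max t (1 - s) := by
    rw [← max_sub_sub_left, sub_sub_cancel]
  rw [localOsc, hexp, ← div_le_iff₀' two_pos]
  exact le_ciInf fun c => (div_le_iff₀' two_pos).2 (hbound c)
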